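/- For every positive integer k, the group P_k = ⟨a, b ∣ a b^{2^k} a⁻¹ b^{2^k}, b a² b⁻¹ a²⟩ is torsion-free. -/

import Mathlib

/-!
With `x = a²` and `y = b^(2^k)`, the group `P_k` is the amalgamated product of the two Klein
bottle groups `⟨a, y ∣ a y a⁻¹ = y⁻¹⟩` and `⟨b, x ∣ b x b⁻¹ = x⁻¹⟩` over `⟨x, y⟩ ≅ ℤ²`; that
`x` and `b^(2^k)` commute in the second factor is where `k ≥ 1` enters. Klein bottle groups
`ℤ ⋊ ℤ` are torsion-free, and so is any amalgamated product of torsion-free groups along injective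
maps: cyclic reduction conjugates an element either into a factor or to a reduced word whose first
and last letters lie in different factors, and all powers of such a word are again reduced words,
hence nontrivial by the normal form theorem.
-/

/-- The relations of `P_k = ⟨a, b ∣ a b^(2^k) a⁻¹ b^(2^k), b a² b⁻¹ a²⟩`,
where `a` is `FreeGroup.of 0` and `b` is `FreeGroup.of 1`. -/
def PkRels (k : ℕ) : Set (FreeGroup (Fin 2)) :=
  { FreeGroup.of 0 * (FreeGroup.of 1) ^ (2 ^ k) * (FreeGroup.of 0)⁻¹ * (FreeGroup.of 1) ^ (2 ^ k),
    FreeGroup.of 1 * (FreeGroup.of 0) ^ 2 * (FreeGroup.of 1)⁻¹ * (FreeGroup.of 0) ^ 2 }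

/-- The group `P_k`. -/
abbrev Pk (k : ℕ) : Type := PresentedGroup (PkRels k)

namespace Monoid.PushoutI

variable {ι : Type*} {G : ι → Type*} {H : Type*} [∀ i, Group (G i)] [Group H]
  {φ : ∀ i, H →* G i}

variable (φ) in
/-- `Reduced φ` for words of `CoprodI G`, on bare lists so that words can be cut and glued. -/
def IsReducedList (L : List (Σ i, G i)) : Prop :=
  (∀ p ∈ L, p.2 ∉ (φ p.1).range) ∧ L.IsChain (fun p q => p.1 ≠ q.1)

variable (φ) in
def listProd (L : List (Σ i, G i)) : PushoutI φ :=
  (L.map fun p => of p.1 p.2).prod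

@[simp] lemma listProd_nil : listProd φ [] = 1 := rfl

@[simp] lemma listProd_cons (p : Σ i, G i) (L : List (Σ i, G i)) :
    listProd φ (p :: L) = of p.1 p.2 * listProd φ L := List.prod_cons

@[simp] lemma listProd_append (L M : List (Σ i, G i)) :
    listProd φ (L ++ M) = listProd φ L * listProd φ M := by
  simp [listProd]

lemma listProd_flatten_replicate (L : List (Σ i, G i)) (n : ℕ) :
    listProd φ (List.replicate n L).flatten = listProd φ L ^ n := by
  induction n with
  | zero => simp
  | succ n ih => rw [List.replicate_succ, List.flatten_cons, listProd_append, ih, pow_succ']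

lemma ofCoprodI_word_prod (w : CoprodI.Word G) :
    ofCoprodI (φ := φ) w.prod = listProd φ w.toList := by
  simp [CoprodI.Word.prod, listProd, map_list_prod, Function.comp_def]

namespace IsReducedList

lemma ne_one {L : List (Σ i, G i)} (hL : IsReducedList φ L) {p : Σ i, G i} (hp : p ∈ L) :
    p.2 ≠ 1 := fun h => hL.1 p hp (h ▸ one_mem _)

lemma of_cons {p : Σ i, G i} {L : List (Σ i, G i)} (hL : IsReducedList φ (p :: L)) :
    IsReducedList φ L :=
  ⟨fun q hq => hL.1 q (List.mem_cons_of_mem p hq), hL.2.tail⟩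

lemma append {L M : List (Σ i, G i)} (hL : IsReducedList φ L) (hM : IsReducedList φ M)
    (h : ∀ p ∈ L.getLast?, ∀ q ∈ M.head?, p.1 ≠ q.1) : IsReducedList φ (L ++ M) :=
  ⟨by simpa [or_imp, forall_and] using And.intro hL.1 hM.1,
    List.isChain_append.2 ⟨hL.2, hM.2, h⟩⟩

lemma flatten_replicate {L : List (Σ i, G i)} (hL : IsReducedList φ L)
    (hcyc : ∀ p ∈ L.getLast?, ∀ q ∈ L.head?, p.1 ≠ q.1) (n : ℕ) :
    IsReducedList φ (List.replicate n L).flatten := by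
  induction n with
  | zero => exact ⟨by simp, List.isChain_nil⟩
  | succ n ih =>
    rw [List.replicate_succ, List.flatten_cons]
    refine hL.append ih fun p hp q hq => hcyc p hp q ?_
    cases n with
    | zero => simp at hq
    | succ n =>
      rcases L with _ | ⟨a, L⟩
      · simp at hp
      · simpa using hq

lemma of_append_left {L M : List (Σ i, G i)} (hLM : IsReducedList φ (L ++ M)) :
    IsReducedList φ L :=
  ⟨fun p hp => hLM.1 p (List.mem_append_left M hp), (List.isChain_append.1 hLM.2).1⟩

lemma cons_of_cons {i : ι} {x y : G i} {L : List (Σ i, G i)} (hL : IsReducedList φ (⟨i, x⟩ :: L))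
    (hy : y ∉ (φ i).range) : IsReducedList φ (⟨i, y⟩ :: L) := by
  refine ⟨?_, ?_⟩
  · rintro q (_ | ⟨_, hq⟩)
    · exact hy
    · exact hL.1 q (List.mem_cons_of_mem _ hq)
  · cases L with
    | nil => exact List.isChain_singleton _
    | cons q L => exact List.isChain_cons_cons.2 (List.isChain_cons_cons.1 hL.2)

lemma base_mul_cons {i : ι} {x : G i} {L : List (Σ i, G i)} (hL : IsReducedList φ (⟨i, x⟩ :: L))
    (h : H) : IsReducedList φ (⟨i, φ i h * x⟩ :: L) ∧
      base φ h * listProd φ (⟨i, x⟩ :: L) = listProd φ (⟨i, φ i h * x⟩ :: L) := by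
  refine ⟨hL.cons_of_cons fun hr => hL.1 _ List.mem_cons_self ?_, ?_⟩
  · exact (mul_mem_cancel_left (MonoidHom.mem_range.2 ⟨h, rfl⟩)).1 hr
  · simp [← of_apply_eq_base φ i, mul_assoc]

lemma listProd_notMem_range_base (hφ : ∀ i, Function.Injective (φ i)) {L : List (Σ i, G i)}
    (hL : IsReducedList φ L) (hne : L ≠ []) : listProd φ L ∉ (base φ).range := by
  intro hmem
  let w : CoprodI.Word G := ⟨L, fun p hp => hL.ne_one hp, hL.2⟩
  have hw : Reduced φ w := hL.1
  have hmem' : ofCoprodI w.prod ∈ (base φ).range := by rwa [ofCoprodI_word_prod]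
  exact hne (congrArg CoprodI.Word.toList (hw.eq_empty_of_mem_range hφ hmem'))

end IsReducedList

lemma exists_isReducedList (hφ : ∀ i, Function.Injective (φ i)) (g : PushoutI φ) :
    (∃ h, base φ h = g) ∨ ∃ L, IsReducedList φ L ∧ L ≠ [] ∧ listProd φ L = g := by
  classical
  obtain ⟨d⟩ := NormalWord.transversal_nonempty φ hφ
  set w := NormalWord.equiv (d := d) g
  have hg : w.prod = g := NormalWord.equiv.symm_apply_apply g
  have hw : IsReducedList φ w.toList := by
    refine ⟨fun p hp hr => w.ne_one p hp ?_, w.chain_ne⟩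
    -- `p.2` lies in both the base and the transversal, so `1 * p.2 = p.2 * 1` forces `p.2 = 1`
    have h1 := (d.compl p.1).equiv_fst_eq_self_of_mem_of_one_mem (d.one_mem p.1) hr
    rw [(d.compl p.1).equiv_fst_eq_one_of_mem_of_one_mem (one_mem _)
      (w.normalized p.1 p.2 hp)] at h1
    exact (congrArg Subtype.val h1).symm
  rw [← hg, NormalWord.prod, ofCoprodI_word_prod]
  rcases hlist : w.toList with _ | ⟨⟨i, x⟩, L⟩
  · exact Or.inl ⟨w.head, by simp⟩
  · rw [hlist] at hw
    obtain ⟨hw', hprod⟩ := hw.base_mul_cons w.head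
    exact Or.inr ⟨_, hw', List.cons_ne_nil _ _, hprod.symm⟩

/-- Cyclic reduction: conjugating by the last letter merges it into the first one. -/
lemma exists_conj_listProd_shorter {i : ι} {x y : G i} {r : Σ i, G i} {M : List (Σ i, G i)}
    (hL : IsReducedList φ ((⟨i, x⟩ :: r :: M) ++ [⟨i, y⟩])) :
    ∃ c L', IsReducedList φ L' ∧ L' ≠ [] ∧ L'.length < M.length + 3 ∧
      c * listProd φ ((⟨i, x⟩ :: r :: M) ++ [⟨i, y⟩]) * c⁻¹ = listProd φ L' := by
  have hpre := hL.of_append_left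
  have hconj : of i y * listProd φ ((⟨i, x⟩ :: r :: M) ++ [⟨i, y⟩]) * (of i y)⁻¹ =
      of i (y * x) * listProd φ (r :: M) := by
    simp [mul_assoc]
  by_cases hyx : y * x ∈ (φ i).range
  · obtain ⟨h, hh⟩ := hyx
    obtain ⟨j, z⟩ := r
    obtain ⟨hred, hprod⟩ := hpre.of_cons.base_mul_cons h
    refine ⟨of i y, _, hred, List.cons_ne_nil _ _, by simp, ?_⟩
    rw [hconj, ← hprod, ← hh, of_apply_eq_base]
  · exact ⟨of i y, _, hpre.cons_of_cons hyx, List.cons_ne_nil _ _, by simp, hconj⟩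

lemma listProd_pow_ne_one (hφ : ∀ i, Function.Injective (φ i))
    (hG : ∀ i (g : G i), IsOfFinOrder g → g = 1) {L : List (Σ i, G i)} (hL : IsReducedList φ L)
    (hne : L ≠ []) {n : ℕ} (hn : n ≠ 0) : listProd φ L ^ n ≠ 1 := by
  induction hlen : L.length using Nat.strong_induction_on generalizing L with
  | _ len ih =>
  rcases L with _ | ⟨⟨i, x⟩, R⟩
  · exact absurd rfl hne
  rcases R.eq_nil_or_concat with rfl | ⟨R', ⟨j, y⟩, rfl⟩
  · intro hpow
    have hx : IsOfFinOrder (of (φ := φ) i x) :=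
      isOfFinOrder_iff_pow_eq_one.2 ⟨n, Nat.pos_of_ne_zero hn, by simpa using hpow⟩
    exact hL.ne_one List.mem_cons_self (hG i x ((of_injective hφ i).isOfFinOrder_iff.1 hx))
  rw [List.concat_eq_append, ← List.cons_append] at hL ⊢
  by_cases hij : j = i
  · subst hij
    rcases R' with _ | ⟨r, M⟩
    · exact absurd rfl (List.isChain_pair.1 hL.2)
    obtain ⟨c, L', hL', hne', hlt, hconj⟩ := exists_conj_listProd_shorter hL
    intro hpow
    refine ih L'.length (by simp at hlen; omega) hL' hne' rfl ?_
    rw [← hconj, conj_pow, hpow, mul_one, mul_inv_cancel]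
  · -- the word is cyclically reduced, so its `n`-th power is again a reduced word
    intro hpow
    have hcyc := hL.flatten_replicate (by rw [List.getLast?_append]; simpa using hij) n
    refine hcyc.listProd_notMem_range_base hφ (by simp [hn]) ?_
    rw [listProd_flatten_replicate, hpow]
    exact one_mem _

theorem eq_one_of_isOfFinOrder [Nonempty ι] (hφ : ∀ i, Function.Injective (φ i))
    (hG : ∀ i (g : G i), IsOfFinOrder g → g = 1) {g : PushoutI φ} (hg : IsOfFinOrder g) :
    g = 1 := by
  rcases exists_isReducedList hφ g with ⟨h, rfl⟩ | ⟨L, hL, hne, rfl⟩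
  · obtain ⟨i⟩ := ‹Nonempty ι›
    rw [← of_apply_eq_base φ i] at hg ⊢
    rw [hG i _ ((of_injective hφ i).isOfFinOrder_iff.1 hg), map_one]
  · obtain ⟨n, hn, hpow⟩ := isOfFinOrder_iff_pow_eq_one.1 hg
    exact absurd hpow (listProd_pow_ne_one hφ hG hL hne hn.ne')

end Monoid.PushoutI

open SemidirectProduct

lemma SemidirectProduct.eq_one_of_isOfFinOrder {N G : Type*} [Group N] [Group G]
    {φ : G →* MulAut N} (hN : ∀ n : N, IsOfFinOrder n → n = 1)
    (hG : ∀ g : G, IsOfFinOrder g → g = 1) {x : N ⋊[φ] G} (hx : IsOfFinOrder x) : x = 1 := by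
  have hright : x.right = 1 := hG _ (rightHom.isOfFinOrder hx)
  have hx' : x = inl x.left := by rw [← inl_left_mul_inr_right x, hright, map_one, mul_one]; rfl
  rw [hx'] at hx ⊢
  rw [hN _ ((inl_injective (φ := φ)).isOfFinOrder_iff (f := inl).1 hx), map_one]

lemma MonoidHom.ext_mint_prod {M : Type*} [Monoid M]
    {f g : Multiplicative ℤ × Multiplicative ℤ →* M}
    (h₁ : f (.ofAdd 1, 1) = g (.ofAdd 1, 1)) (h₂ : f (1, .ofAdd 1) = g (1, .ofAdd 1)) : f = g := by
  have hl : f.comp (inl _ _) = g.comp (inl _ _) := ext_mint h₁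
  have hr : f.comp (inr _ _) = g.comp (inr _ _) := ext_mint h₂
  ext p
  rw [← Prod.fst_mul_snd p, map_mul, map_mul]
  exact congr($(DFunLike.congr_fun hl p.1) * $(DFunLike.congr_fun hr p.2))

/-- The Klein bottle group `⟨s, t ∣ t s t⁻¹ = s⁻¹⟩`. -/
abbrev KleinBottleGroup : Type :=
  Multiplicative ℤ ⋊[zpowersHom _ (MulEquiv.inv (Multiplicative ℤ))] Multiplicative ℤ

namespace KleinBottleGroup

def s : KleinBottleGroup := inl (.ofAdd 1)

def t : KleinBottleGroup := inr (.ofAdd 1)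

lemma t_mul_s_mul_t_inv_mul_s : t * s * t⁻¹ * s = 1 := by
  rw [t, s, ← map_inv, ← inl_aut, ← map_mul]
  simp

lemma eq_one_of_isOfFinOrder {x : KleinBottleGroup} (hx : IsOfFinOrder x) : x = 1 :=
  SemidirectProduct.eq_one_of_isOfFinOrder (fun _ h => h.eq_one') (fun _ h => h.eq_one') hx

section lift

variable {P : Type*} [Group P]

def lift (u v : P) (h : v * u * v⁻¹ * u = 1) : KleinBottleGroup →* P :=
  SemidirectProduct.lift (zpowersHom P u) (zpowersHom P v) fun g => by
    have hconj (j : ℤ) : MulAut.conj v (u ^ j) = (u ^ j)⁻¹ := by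
      rw [MulAut.conj_apply, ← conj_zpow, eq_inv_of_mul_eq_one_left h, inv_zpow]
    suffices ∀ (m : ℤ) (n : Multiplicative ℤ), u ^ ((MulEquiv.inv _ ^ m) n).toAdd =
        (MulAut.conj v ^ m) (u ^ n.toAdd) by
      ext; simpa using this g.toAdd (.ofAdd 1)
    intro m
    induction m using Int.induction_on with
    | zero => simp
    | succ m ih =>
      intro n
      rw [zpow_add_one, zpow_add_one, MulAut.mul_apply, MulAut.mul_apply, ih, hconj]
      simp
    | pred m ih =>
      intro n
      rw [zpow_sub_one, zpow_sub_one, MulAut.mul_apply, MulAut.mul_apply, ih]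
      congr 1
      rw [MulAut.inv_apply (e := MulAut.conj v), MulEquiv.eq_symm_apply]
      simp only [MulAut.inv_apply, MulEquiv.inv_symm, MulEquiv.inv_apply, toAdd_inv, zpow_neg,
        map_inv, hconj, inv_inv]

@[simp] lemma lift_s {u v : P} (h : v * u * v⁻¹ * u = 1) : lift u v h s = u := by simp [lift, s]

@[simp] lemma lift_t {u v : P} (h : v * u * v⁻¹ * u = 1) : lift u v h t = v := by simp [lift, t]

end lift

lemma action_pow_two_mul (r : ℕ) (w : Multiplicative ℤ) :
    zpowersHom _ (MulEquiv.inv (Multiplicative ℤ)) (w ^ (2 * r)) = 1 := by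
  have hinv : MulEquiv.inv (Multiplicative ℤ) ^ 2 = 1 := by ext; simp [pow_two]
  rw [map_pow, pow_mul, zpowersHom_apply, ← zpow_natCast _ 2, ← zpow_mul, mul_comm, zpow_mul,
    zpow_natCast, hinv, one_zpow, one_pow]

/-- `(m, n) ↦ s ^ m * t ^ (2 * r * n)`; its image is abelian because `t ^ 2` is central. -/
def latticeHom (r : ℕ) : Multiplicative ℤ × Multiplicative ℤ →* KleinBottleGroup where
  toFun p := ⟨p.1, p.2 ^ (2 * r)⟩
  map_one' := by ext <;> simp
  map_mul' p q := by
    ext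
    · change p.1 * q.1 = p.1 * zpowersHom (MulAut _) (MulEquiv.inv _) (p.2 ^ (2 * r)) q.1
      rw [action_pow_two_mul, MulAut.one_apply]
    · exact mul_pow p.2 q.2 (2 * r)

lemma latticeHom_injective {r : ℕ} (hr : r ≠ 0) : Function.Injective (latticeHom r) := by
  intro p q hpq
  rw [SemidirectProduct.ext_iff] at hpq
  exact Prod.ext hpq.1 (pow_left_injective (by omega) hpq.2)

lemma latticeHom_ofAdd_one_one (r : ℕ) : latticeHom r (.ofAdd 1, 1) = s := by
  ext <;> rfl

lemma latticeHom_one_ofAdd_one (r : ℕ) : latticeHom r (1, .ofAdd 1) = t ^ (2 * r) := by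
  rw [t, ← map_pow]; ext <;> rfl

end KleinBottleGroup

namespace Pk

open Monoid KleinBottleGroup

variable {k : ℕ}

/-- The coordinates of `ℤ²` are the exponents of `x = a²` and `y = b^(2^k)`. In the first factor
`a ↦ t`, `y ↦ s`; in the second `b ↦ t`, `x ↦ s`. -/
def amalgamMaps (k : ℕ) : Fin 2 → (Multiplicative ℤ × Multiplicative ℤ →* KleinBottleGroup) :=
  ![(latticeHom 1).comp (MulEquiv.prodComm).toMonoidHom, latticeHom (2 ^ (k - 1))]

lemma amalgamMaps_injective (i : Fin 2) : Function.Injective (amalgamMaps k i) := by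
  fin_cases i
  · exact (latticeHom_injective one_ne_zero).comp (MulEquiv.injective _)
  · exact latticeHom_injective (pow_ne_zero _ two_ne_zero)

abbrev Amalgam (k : ℕ) : Type := PushoutI (amalgamMaps k)

lemma two_mul_two_pow_pred (hk : 0 < k) : 2 * 2 ^ (k - 1) = 2 ^ k := by
  rw [← pow_succ']; congr; omega

lemma of_zero_t_sq : (PushoutI.of 0 t : Amalgam k) ^ 2 = PushoutI.of 1 s := by
  rw [← map_pow, ← latticeHom_one_ofAdd_one 1, ← latticeHom_ofAdd_one_one (2 ^ (k - 1))]
  exact (PushoutI.of_apply_eq_base (amalgamMaps k) 0 (.ofAdd 1, 1)).trans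
    (PushoutI.of_apply_eq_base (amalgamMaps k) 1 (.ofAdd 1, 1)).symm

lemma of_one_t_pow (hk : 0 < k) : (PushoutI.of 1 t : Amalgam k) ^ 2 ^ k = PushoutI.of 0 s := by
  rw [← map_pow, ← two_mul_two_pow_pred hk, ← latticeHom_one_ofAdd_one,
    ← latticeHom_ofAdd_one_one 1]
  exact (PushoutI.of_apply_eq_base (amalgamMaps k) 1 (1, .ofAdd 1)).trans
    (PushoutI.of_apply_eq_base (amalgamMaps k) 0 (1, .ofAdd 1)).symm

def toAmalgam (hk : 0 < k) : Pk k →* Amalgam k :=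
  PresentedGroup.toGroup (f := ![PushoutI.of 0 t, PushoutI.of 1 t]) <| by
    rintro r (rfl | rfl)
    · simp only [map_mul, map_pow, map_inv, FreeGroup.lift_apply_of]
      simp [of_one_t_pow hk, ← map_inv, ← map_mul, t_mul_s_mul_t_inv_mul_s]
    · simp only [map_mul, map_pow, map_inv, FreeGroup.lift_apply_of]
      simp [of_zero_t_sq, ← map_inv, ← map_mul, t_mul_s_mul_t_inv_mul_s]

lemma first_rel (k : ℕ) : (.of 0 : Pk k) * .of 1 ^ 2 ^ k * (.of 0)⁻¹ * .of 1 ^ 2 ^ k = 1 :=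
  PresentedGroup.one_of_mem (Set.mem_insert _ _)

lemma second_rel (k : ℕ) : (.of 1 : Pk k) * .of 0 ^ 2 * (.of 1)⁻¹ * .of 0 ^ 2 = 1 :=
  PresentedGroup.one_of_mem (Set.mem_insert_of_mem _ rfl)

def ofAmalgam (hk : 0 < k) : Amalgam k →* Pk k :=
  PushoutI.lift ![KleinBottleGroup.lift _ _ (first_rel k), KleinBottleGroup.lift _ _ (second_rel k)]
    ((KleinBottleGroup.lift _ _ (first_rel k)).comp (amalgamMaps k 0)) <| by
    intro i
    fin_cases i
    · rfl
    · refine MonoidHom.ext_mint_prod ?_ ?_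
      · simp [amalgamMaps, latticeHom_ofAdd_one_one, latticeHom_one_ofAdd_one]
      · simp [amalgamMaps, latticeHom_ofAdd_one_one, latticeHom_one_ofAdd_one,
          two_mul_two_pow_pred hk]

lemma ofAmalgam_comp_toAmalgam (hk : 0 < k) :
    (ofAmalgam hk).comp (toAmalgam hk) = MonoidHom.id (Pk k) := by
  refine PresentedGroup.ext fun i => ?_
  fin_cases i <;> simp [ofAmalgam, toAmalgam]

lemma toAmalgam_injective (hk : 0 < k) : Function.Injective (toAmalgam hk) :=
  Function.LeftInverse.injective (DFunLike.congr_fun (ofAmalgam_comp_toAmalgam hk))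

end Pk

/-- For every positive integer `k`, the group
`P_k = ⟨a, b ∣ a b^(2^k) a⁻¹ b^(2^k), b a² b⁻¹ a²⟩` is torsion-free. -/
theorem Pk_isTorsionFree (k : ℕ) (hk : 0 < k) : ∀ g : Pk k, g ≠ 1 → ¬IsOfFinOrder g := by
  intro g hg hfin
  have himage : Pk.toAmalgam hk g = 1 :=
    Monoid.PushoutI.eq_one_of_isOfFinOrder Pk.amalgamMaps_injective
      (fun _ _ => KleinBottleGroup.eq_one_of_isOfFinOrder) ((Pk.toAmalgam hk).isOfFinOrder hfin)
  exact hg (Pk.toAmalgam_injective hk (himage.trans (map_one _).symm))
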